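/- A Pfaffian distribution H ⊂ TP on a Pfaffian fibration π: (P,H) → M is Frobenius-involutive if and only if the classical prolongation Prol(P,H) coincides with the partial prolongation J^1_H P and the symbol map ∂_H vanishes. -/

import Mathlib

/-!
STATEMENT 17: A Pfaffian distribution H on a Pfaffian fibration π : (P,H) → M is
Frobenius involutive if and only if the classical prolongation Prol(P,H) coincides
with the partial prolongation J¹_H P (i.e. every partial integral element is an
integral element) and the symbol map ∂_H : g(H) → Hom(π*TM, TP/H),
∂_H(v)(Y) = κ_H(v,Ȳ), vanishes.

Local model: the fibration is (a chart of) a smooth surjective submersion; tangent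
spaces are the ambient spaces; a point of J¹P over p is a linear splitting
ζ : T_{π(p)}M → T_p P of dπ_p; `⁅X,Y⁆ = (dY)(X) − (dX)(Y)`; curvature values
`κ_H(u,v) = [U,V] mod H` are computed via extensions to vector fields tangent to `H`.
-/

variable {P M : Type*}
  [NormedAddCommGroup P] [NormedSpace ℝ P] [FiniteDimensional ℝ P]
  [NormedAddCommGroup M] [NormedSpace ℝ M] [FiniteDimensional ℝ M]

/-- Lie bracket of vector fields (local model). -/
noncomputable def lieB {Q : Type*} [NormedAddCommGroup Q] [NormedSpace ℝ Q]
    (X Y : Q → Q) : Q → Q :=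
  fun p => fderiv ℝ Y p (X p) - fderiv ℝ X p (Y p)

set_option linter.unusedSectionVars false in
lemma lieB_sub_smul (X Y : P → P) (hX : Differentiable ℝ X) (hY : Differentiable ℝ Y)
    (c : ℝ) (p : P) :
    lieB X (fun q => Y q - c • X q) p = lieB X Y p := by
  have h1 : fderiv ℝ (fun q => Y q - c • X q) p
      = fderiv ℝ Y p - c • fderiv ℝ X p := by
    rw [fderiv_fun_sub (f := Y) (g := fun q => c • X q) (hY p) ((hX p).const_smul c), fderiv_fun_const_smul (hX p)]
  simp only [lieB, h1, ContinuousLinearMap.sub_apply, ContinuousLinearMap.smul_apply,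
    map_sub, map_smul]
  abel

set_option linter.unusedSectionVars false in
lemma lieB_antisymm (X Y : P → P) (p : P) : lieB X Y p = - lieB Y X p := by
  simp [lieB]

/-- `(π, H)` is a Pfaffian fibration. -/
def IsPfaffianFibrationH (π : P → M) (H : P → Submodule ℝ P) : Prop :=
  ContDiff ℝ (⊤ : ℕ∞) π ∧ Function.Surjective π ∧
  (∀ p, Function.Surjective (fderiv ℝ π p)) ∧
  (∀ p, H p ⊔ LinearMap.ker (fderiv ℝ π p : P →ₗ[ℝ] M) = ⊤) ∧
  (∀ X Y : P → P, ContDiff ℝ (⊤ : ℕ∞) X → ContDiff ℝ (⊤ : ℕ∞) Y →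
    (∀ p, X p ∈ H p ⊓ LinearMap.ker (fderiv ℝ π p : P →ₗ[ℝ] M)) →
    (∀ p, Y p ∈ H p ⊓ LinearMap.ker (fderiv ℝ π p : P →ₗ[ℝ] M)) →
    ∀ p, lieB X Y p ∈ H p ⊓ LinearMap.ker (fderiv ℝ π p : P →ₗ[ℝ] M))

theorem involutive_iff_prolongation_full_and_symbolMap_zero
    (π : P → M) (H : P → Submodule ℝ P) (hP : IsPfaffianFibrationH π H) :
    -- H is Frobenius involutive ...
    (∀ X Y : P → P, ContDiff ℝ (⊤ : ℕ∞) X → ContDiff ℝ (⊤ : ℕ∞) Y →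
      (∀ p, X p ∈ H p) → (∀ p, Y p ∈ H p) → ∀ p, lieB X Y p ∈ H p) ↔
    -- ... iff Prol(P,H) = J¹_H P ...
    ((∀ (p : P) (ζ : M →ₗ[ℝ] P),
        (∀ ξ : M, fderiv ℝ π p (ζ ξ) = ξ) →       -- ζ is a splitting of dπ_p
        (∀ ξ : M, ζ ξ ∈ H p) →                     -- (p,ζ) ∈ J¹_H P
        -- then (p,ζ) ∈ Prol(P,H), i.e. ζ*κ_H = 0:
        ∀ (ξ₁ ξ₂ : M) (U W : P → P), ContDiff ℝ (⊤ : ℕ∞) U → ContDiff ℝ (⊤ : ℕ∞) W →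
          (∀ q, U q ∈ H q) → (∀ q, W q ∈ H q) →
          U p = ζ ξ₁ → W p = ζ ξ₂ → lieB U W p ∈ H p) ∧
     -- ... and the symbol map ∂_H vanishes: κ_H(v,w̄) ∈ H for v ∈ g(H), w̄ ∈ H:
     (∀ (p : P) (v w : P), v ∈ H p → fderiv ℝ π p v = 0 → w ∈ H p →
        ∀ U W : P → P, ContDiff ℝ (⊤ : ℕ∞) U → ContDiff ℝ (⊤ : ℕ∞) W →
          (∀ q, U q ∈ H q) → (∀ q, W q ∈ H q) →
          U p = v → W p = w → lieB U W p ∈ H p)) := by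
  obtain ⟨hπ, hsurj, hdsurj, hsup, -⟩ := hP
  constructor
  · intro hinv
    exact ⟨fun p ζ _ _ ξ₁ ξ₂ U W hU hW hUH hWH _ _ => hinv U W hU hW hUH hWH p,
           fun p v w _ _ _ U W hU hW hUH hWH _ _ => hinv U W hU hW hUH hWH p⟩
  · rintro ⟨h1, h2⟩ X Y hX hY hXH hYH p
    set a : M := fderiv ℝ π p (X p) with ha_def
    set b : M := fderiv ℝ π p (Y p) with hb_def
    by_cases ha : a = 0
    · exact h2 p (X p) (Y p) (hXH p) ha (hYH p) X Y hX hY hXH hYH rfl rfl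
    by_cases hli : LinearIndependent ℝ ![a, b]
    · -- build a section s₀ : M →ₗ H p of dπ
      have hfH : LinearMap.range ((fderiv ℝ π p).toLinearMap.comp (H p).subtype) = ⊤ := by
        rw [LinearMap.range_eq_top]
        intro ξ
        obtain ⟨u, hu⟩ := hdsurj p ξ
        have hmem : u ∈ H p ⊔ LinearMap.ker (fderiv ℝ π p : P →ₗ[ℝ] M) := by
          rw [hsup p]; trivial
        obtain ⟨h, hh, k, hk, hhk⟩ := Submodule.mem_sup.mp hmem
        refine ⟨⟨h, hh⟩, ?_⟩
        have hk0 : fderiv ℝ π p k = 0 := hk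
        have : fderiv ℝ π p u = fderiv ℝ π p h + fderiv ℝ π p k := by
          rw [← map_add, hhk]
        simp only [LinearMap.comp_apply, Submodule.subtype_apply,
          ContinuousLinearMap.coe_coe]
        rw [← hu, this, hk0, add_zero]
      obtain ⟨s₀, hs₀⟩ :=
        ((fderiv ℝ π p).toLinearMap.comp (H p).subtype).exists_rightInverse_of_surjective hfH
      have hs₀' : ∀ ξ : M, fderiv ℝ π p ((s₀ ξ : P)) = ξ := fun ξ => by
        have := LinearMap.congr_fun hs₀ ξ
        simpa using this
      -- vertical corrections
      set W' : Submodule ℝ P := H p ⊓ LinearMap.ker (fderiv ℝ π p : P →ₗ[ℝ] M) with hW'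
      have hv' : X p - (s₀ a : P) ∈ W' := by
        rw [hW', Submodule.mem_inf]
        refine ⟨(H p).sub_mem (hXH p) (s₀ a).2, ?_⟩
        rw [LinearMap.mem_ker, map_sub, ContinuousLinearMap.coe_coe, hs₀' a, ← ha_def, sub_self]
      have hw' : Y p - (s₀ b : P) ∈ W' := by
        rw [hW', Submodule.mem_inf]
        refine ⟨(H p).sub_mem (hYH p) (s₀ b).2, ?_⟩
        rw [LinearMap.mem_ker, map_sub, ContinuousLinearMap.coe_coe, hs₀' b, ← hb_def, sub_self]
      -- linear map on span{a,b} sending a ↦ v', b ↦ w', then extend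
      let B := Module.Basis.span hli
      let c₀ : Submodule.span ℝ (Set.range ![a, b]) →ₗ[ℝ] W' :=
        B.constr ℝ ![⟨X p - (s₀ a : P), hv'⟩, ⟨Y p - (s₀ b : P), hw'⟩]
      obtain ⟨c, hc⟩ := LinearMap.exists_extend c₀
      -- members of span
      have hamem : a ∈ Submodule.span ℝ (Set.range ![a, b]) :=
        Submodule.subset_span ⟨0, rfl⟩
      have hbmem : b ∈ Submodule.span ℝ (Set.range ![a, b]) :=
        Submodule.subset_span ⟨1, rfl⟩
      have hca : c a = c₀ ⟨a, hamem⟩ := by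
        have := LinearMap.congr_fun hc ⟨a, hamem⟩; simpa using this
      have hcb : c b = c₀ ⟨b, hbmem⟩ := by
        have := LinearMap.congr_fun hc ⟨b, hbmem⟩; simpa using this
      have hBa : (B 0 : Submodule.span ℝ (Set.range ![a, b])) = ⟨a, hamem⟩ := by
        ext; simp [B, Module.Basis.span_apply]
      have hBb : (B 1 : Submodule.span ℝ (Set.range ![a, b])) = ⟨b, hbmem⟩ := by
        ext; simp [B, Module.Basis.span_apply]
      have hc₀a : (c₀ ⟨a, hamem⟩ : P) = X p - (s₀ a : P) := by
        rw [← hBa]; simp [c₀, Module.Basis.constr_basis]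
      have hc₀b : (c₀ ⟨b, hbmem⟩ : P) = Y p - (s₀ b : P) := by
        rw [← hBb]; simp [c₀, Module.Basis.constr_basis]
      -- the splitting ζ
      set ζ : M →ₗ[ℝ] P := (H p).subtype.comp s₀ + W'.subtype.comp c with hζ
      have hζsplit : ∀ ξ : M, fderiv ℝ π p (ζ ξ) = ξ := by
        intro ξ
        have hker : fderiv ℝ π p ((c ξ : P)) = 0 := (c ξ).2.2
        simp only [hζ, LinearMap.add_apply, LinearMap.comp_apply, Submodule.subtype_apply,
          map_add, hker, add_zero, hs₀' ξ]
      have hζH : ∀ ξ : M, ζ ξ ∈ H p := fun ξ =>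
        (H p).add_mem (s₀ ξ).2 (c ξ).2.1
      have hζa : X p = ζ a := by
        simp only [hζ, LinearMap.add_apply, LinearMap.comp_apply, Submodule.subtype_apply,
          hca, hc₀a]
        abel
      have hζb : Y p = ζ b := by
        simp only [hζ, LinearMap.add_apply, LinearMap.comp_apply, Submodule.subtype_apply,
          hcb, hc₀b]
        abel
      exact h1 p ζ hζsplit hζH a b X Y hX hY hXH hYH hζa hζb
    · -- dependent case: b = c • a
      rw [LinearIndependent.pair_iff' ha] at hli
      push_neg at hli
      obtain ⟨c, hc⟩ := hli
      set Y' : P → P := fun q => Y q - c • X q with hY'def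
      have hY' : ContDiff ℝ (⊤ : ℕ∞) Y' := hY.sub (hX.const_smul c)
      have hY'H : ∀ q, Y' q ∈ H q := fun q =>
        (H q).sub_mem (hYH q) ((H q).smul_mem c (hXH q))
      have hvert : fderiv ℝ π p (Y' p) = 0 := by
        simp only [hY'def, map_sub, map_smul, ← ha_def, ← hb_def, hc, sub_self]
      have hmem := h2 p (Y' p) (X p) (hY'H p) hvert (hXH p) Y' X hY' hX hY'H hXH rfl rfl
      have heq : lieB X Y p = - lieB Y' X p := by
        rw [← lieB_sub_smul X Y (hX.differentiable (by simp)) (hY.differentiable (by simp)) c p]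
        exact lieB_antisymm X Y' p
      rw [heq]
      exact (H p).neg_mem hmem
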